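/- arXiv:2108.08285 — 3 statements merged into one kernel-verified Lean document; each statement's English description precedes it below -/
import Mathlib

section
/- Along any nonnegative solution of the TYC-SIT system with f + m + s1 + s2 ≤ K, the derivative of V = f + m + s1 + s2 satisfies V' ≤ (Kβ − δ)(m + s2) − δ(f + s1). In particular, if β < δ/K and μ1 = μ2 = 0, then V' ≤ 0, with V' < 0 whenever (f, m, s1, s2) ≠ (0,0,0,0). -/
theorem stmt_3 (β δ K f m s1 s2 : ℝ) (hβ : 0 < β) (hδ : 0 < δ) (hK : 0 < K)
    (hf : 0 ≤ f) (hm : 0 ≤ m) (hs1 : 0 ≤ s1) (hs2 : 0 ≤ s2)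
    (hpos : 0 < m + s1 + s2) (hsum : f + m + s1 + s2 ≤ K) :
    let L : ℝ := 1 - (f + m + s1 + s2) / K
    let V' : ℝ :=
      (1/2 * f * m * β * L * (m / (m + s1 + s2)) - δ * f)
      + (1/2 * f * m * β * L * (m / (m + s1 + s2))
          + f * s2 * β * L * (s2 / (m + s1 + s2)) - δ * m)
      + (-δ * s1) + (-δ * s2)
    V' ≤ (K * β - δ) * (m + s2) - δ * (f + s1) ∧
    (β < δ / K → (f, m, s1, s2) ≠ (0, 0, 0, 0) → V' < 0) := by
  intro L V'
  have hL0 : 0 ≤ L := by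
    have : (f + m + s1 + s2) / K ≤ 1 := by
      rw [div_le_one hK]; linarith
    simp only [L]; linarith
  have hL1 : L ≤ 1 := by
    have : 0 ≤ (f + m + s1 + s2) / K := div_nonneg (by linarith) hK.le
    simp only [L]; linarith
  have hfK : f ≤ K := by linarith
  have ha0 : 0 ≤ m / (m + s1 + s2) := div_nonneg hm hpos.le
  have ha1 : m / (m + s1 + s2) ≤ 1 := by rw [div_le_one hpos]; linarith
  have hb0 : 0 ≤ s2 / (m + s1 + s2) := div_nonneg hs2 hpos.le
  have hb1 : s2 / (m + s1 + s2) ≤ 1 := by rw [div_le_one hpos]; linarith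
  have hfla : f * L * (m / (m + s1 + s2)) ≤ K :=
    le_trans (le_trans (mul_le_of_le_one_right (mul_nonneg hf hL0) ha1)
      (mul_le_of_le_one_right hf hL1)) hfK
  have hflb : f * L * (s2 / (m + s1 + s2)) ≤ K :=
    le_trans (le_trans (mul_le_of_le_one_right (mul_nonneg hf hL0) hb1)
      (mul_le_of_le_one_right hf hL1)) hfK
  have h1 : f * m * β * L * (m / (m + s1 + s2)) ≤ K * β * m := by
    nlinarith [mul_le_mul_of_nonneg_right hfla (mul_nonneg hβ.le hm)]
  have h2 : f * s2 * β * L * (s2 / (m + s1 + s2)) ≤ K * β * s2 := by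
    nlinarith [mul_le_mul_of_nonneg_right hflb (mul_nonneg hβ.le hs2)]
  have hmain : V' ≤ (K * β - δ) * (m + s2) - δ * (f + s1) := by
    simp only [V']; linarith
  refine ⟨hmain, fun hβδ hne => ?_⟩
  have hKβδ : K * β - δ < 0 := by
    have := (lt_div_iff₀ hK).mp hβδ
    nlinarith
  have hrhs : (K * β - δ) * (m + s2) - δ * (f + s1) < 0 := by
    rcases lt_or_eq_of_le (by linarith : (0:ℝ) ≤ m + s2) with h | h
    · nlinarith
    · have hs1pos : 0 < s1 := by
        nlinarith
      nlinarith
  linarith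
end

section
/- If β·K < δ, then every nonnegative solution of the TYC-SIT system with μ1 = μ2 = 0 that remains in the region {f + m + s1 + s2 ≤ K, m + s1 + s2 > 0} satisfies V(t) ≤ V(0)·exp(−ct) for c = min(δ − Kβ, δ) > 0, where V = f + m + s1 + s2; hence the solution converges to (0,0,0,0). -/
/-!
The total population `V = f + m + s1 + s2` satisfies `V' ≤ -c V`: the only growth term is
`β f L (m² + s2²) / (m + s1 + s2)`, whose coefficient of `β` lies between `0` and `K V`, so it
is absorbed by the death term `-δ V` at rate `c = δ - max (β K) 0` whatever the sign of `β`.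
Grönwall's inequality then gives the exponential bound, and each nonnegative component is
squeezed between `0` and `V`.
-/

open Real Set Filter Topology

theorem le_mul_exp_neg_of_hasDerivAt_le {V V' : ℝ → ℝ} {c : ℝ}
    (hV : ∀ t ≥ (0 : ℝ), HasDerivAt V (V' t) t)
    (hbound : ∀ t ≥ (0 : ℝ), V' t ≤ -c * V t) :
    ∀ t ≥ (0 : ℝ), V t ≤ V 0 * exp (-c * t) := by
  intro t ht
  have key := le_gronwallBound_of_liminf_deriv_right_le
    (f := V) (K := -c) (ε := 0) (a := 0) (b := t)
    (fun x hx => (hV x hx.1).continuousAt.continuousWithinAt)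
    (fun x hx _ hr => (hV x hx.1).hasDerivWithinAt.liminf_right_slope_le hr)
    le_rfl (fun x hx => (add_zero (-c * V x)).symm ▸ hbound x hx.1) t ⟨ht, le_rfl⟩
  simpa [gronwallBound_ε0] using key

theorem tendsto_zero_of_nonneg_of_le_mul_exp_neg {X : ℝ → ℝ} {A c : ℝ} (hc : 0 < c)
    (h0 : ∀ t ≥ (0 : ℝ), 0 ≤ X t) (hX : ∀ t ≥ (0 : ℝ), X t ≤ A * exp (-c * t)) :
    Tendsto X atTop (𝓝 0) := by
  have hexp : Tendsto (fun t => A * exp (-c * t)) atTop (𝓝 0) := by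
    simpa using ((tendsto_exp_atBot.comp
      (tendsto_id.const_mul_atTop_of_neg (neg_neg_iff_pos.mpr hc))).const_mul A)
  exact tendsto_of_tendsto_of_tendsto_of_le_of_le' tendsto_const_nhds hexp
    (eventually_ge_atTop 0 |>.mono h0) (eventually_ge_atTop 0 |>.mono hX)

section TycSit

variable {β δ K f m s1 s2 : ℝ}

theorem tycSit_rhs_sum_eq (hS : 0 < m + s1 + s2) :
    (1/2 * f * m * β * (1 - (f + m + s1 + s2) / K) * (m / (m + s1 + s2)) - δ * f)
      + (1/2 * f * m * β * (1 - (f + m + s1 + s2) / K) * (m / (m + s1 + s2))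
        + f * s2 * β * (1 - (f + m + s1 + s2) / K) * (s2 / (m + s1 + s2)) - δ * m)
      + -δ * s1 + -δ * s2
    = β * (f * (1 - (f + m + s1 + s2) / K) * ((m * m + s2 * s2) / (m + s1 + s2)))
      - δ * (f + m + s1 + s2) := by
  field_simp
  ring

theorem tycSit_growth_le (hf : 0 ≤ f) (hm : 0 ≤ m) (hs1 : 0 ≤ s1) (hs2 : 0 ≤ s2)
    (hS : 0 < m + s1 + s2) (hVK : f + m + s1 + s2 ≤ K) :
    0 ≤ f * (1 - (f + m + s1 + s2) / K) * ((m * m + s2 * s2) / (m + s1 + s2)) ∧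
      f * (1 - (f + m + s1 + s2) / K) * ((m * m + s2 * s2) / (m + s1 + s2))
        ≤ K * (f + m + s1 + s2) := by
  have hK : 0 < K := by linarith
  have hL0 : 0 ≤ 1 - (f + m + s1 + s2) / K := by
    rw [sub_nonneg, div_le_one hK]; exact hVK
  have hL1 : 1 - (f + m + s1 + s2) / K ≤ 1 := by
    have : 0 ≤ (f + m + s1 + s2) / K := by positivity
    linarith
  have hfL : f * (1 - (f + m + s1 + s2) / K) ≤ K := by nlinarith
  have hq : (m * m + s2 * s2) / (m + s1 + s2) ≤ f + m + s1 + s2 := by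
    rw [div_le_iff₀ hS]; nlinarith
  exact ⟨by positivity, mul_le_mul hfL hq (by positivity) hK.le⟩

theorem tycSit_rhs_sum_le (hf : 0 ≤ f) (hm : 0 ≤ m) (hs1 : 0 ≤ s1) (hs2 : 0 ≤ s2)
    (hS : 0 < m + s1 + s2) (hVK : f + m + s1 + s2 ≤ K) :
    (1/2 * f * m * β * (1 - (f + m + s1 + s2) / K) * (m / (m + s1 + s2)) - δ * f)
      + (1/2 * f * m * β * (1 - (f + m + s1 + s2) / K) * (m / (m + s1 + s2))
        + f * s2 * β * (1 - (f + m + s1 + s2) / K) * (s2 / (m + s1 + s2)) - δ * m)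
      + -δ * s1 + -δ * s2
    ≤ -min (δ - K * β) δ * (f + m + s1 + s2) := by
  rw [tycSit_rhs_sum_eq hS]
  obtain ⟨hX0, hXV⟩ := tycSit_growth_le hf hm hs1 hs2 hS hVK
  set X := f * (1 - (f + m + s1 + s2) / K) * ((m * m + s2 * s2) / (m + s1 + s2))
  have hV : 0 ≤ f + m + s1 + s2 := by linarith
  rcases le_total 0 β with hβ | hβ
  · have := mul_le_mul_of_nonneg_right (min_le_left (δ - K * β) δ) hV
    nlinarith
  · have := mul_le_mul_of_nonneg_right (min_le_right (δ - K * β) δ) hV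
    nlinarith

end TycSit

theorem stmt_5_general (β δ K : ℝ) (hδ : 0 < δ)
    (hstab : β * K < δ)
    (f m s1 s2 : ℝ → ℝ)
    (hf : ∀ t ≥ (0 : ℝ), HasDerivAt f
      (1/2 * f t * m t * β * (1 - (f t + m t + s1 t + s2 t) / K) *
        (m t / (m t + s1 t + s2 t)) - δ * f t) t)
    (hm : ∀ t ≥ (0 : ℝ), HasDerivAt m
      (1/2 * f t * m t * β * (1 - (f t + m t + s1 t + s2 t) / K) *
        (m t / (m t + s1 t + s2 t))
       + f t * s2 t * β * (1 - (f t + m t + s1 t + s2 t) / K) *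
        (s2 t / (m t + s1 t + s2 t)) - δ * m t) t)
    (hs1 : ∀ t ≥ (0 : ℝ), HasDerivAt s1 (-δ * s1 t) t)
    (hs2 : ∀ t ≥ (0 : ℝ), HasDerivAt s2 (-δ * s2 t) t)
    (hnonneg : ∀ t ≥ (0 : ℝ), 0 ≤ f t ∧ 0 ≤ m t ∧ 0 ≤ s1 t ∧ 0 ≤ s2 t)
    (hreg : ∀ t ≥ (0 : ℝ), 0 < m t + s1 t + s2 t ∧ f t + m t + s1 t + s2 t ≤ K) :
    let c : ℝ := min (δ - K * β) δ
    (0 < c) ∧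
    (∀ t ≥ (0 : ℝ),
      f t + m t + s1 t + s2 t ≤ (f 0 + m 0 + s1 0 + s2 0) * Real.exp (-c * t)) ∧
    Filter.Tendsto f Filter.atTop (nhds 0) ∧
    Filter.Tendsto m Filter.atTop (nhds 0) ∧
    Filter.Tendsto s1 Filter.atTop (nhds 0) ∧
    Filter.Tendsto s2 Filter.atTop (nhds 0) := by
  intro c
  have hc : 0 < c := lt_min (by linarith) hδ
  have hV : ∀ t ≥ (0 : ℝ),
      f t + m t + s1 t + s2 t ≤ (f 0 + m 0 + s1 0 + s2 0) * exp (-c * t) :=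
    le_mul_exp_neg_of_hasDerivAt_le (V := fun t => f t + m t + s1 t + s2 t)
      (fun t ht => (((hf t ht).add (hm t ht)).add (hs1 t ht)).add (hs2 t ht))
      (fun t ht => by
        obtain ⟨hf0, hm0, hs10, hs20⟩ := hnonneg t ht
        exact tycSit_rhs_sum_le hf0 hm0 hs10 hs20 (hreg t ht).1 (hreg t ht).2)
  refine ⟨hc, hV, ?_, ?_, ?_, ?_⟩ <;>
    refine tendsto_zero_of_nonneg_of_le_mul_exp_neg (A := f 0 + m 0 + s1 0 + s2 0) hc
      (fun t ht => ?_) (fun t ht => ?_) <;>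
    obtain ⟨hf0, hm0, hs10, hs20⟩ := hnonneg t ht <;>
    linarith [hV t ht]

theorem stmt_5 (β δ K : ℝ) (hβ : 0 < β) (hδ : 0 < δ) (hK : 0 < K)
    (hstab : β * K < δ)
    (f m s1 s2 : ℝ → ℝ)
    (hf : ∀ t ≥ (0 : ℝ), HasDerivAt f
      (1/2 * f t * m t * β * (1 - (f t + m t + s1 t + s2 t) / K) *
        (m t / (m t + s1 t + s2 t)) - δ * f t) t)
    (hm : ∀ t ≥ (0 : ℝ), HasDerivAt m
      (1/2 * f t * m t * β * (1 - (f t + m t + s1 t + s2 t) / K) *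
        (m t / (m t + s1 t + s2 t))
       + f t * s2 t * β * (1 - (f t + m t + s1 t + s2 t) / K) *
        (s2 t / (m t + s1 t + s2 t)) - δ * m t) t)
    (hs1 : ∀ t ≥ (0 : ℝ), HasDerivAt s1 (-δ * s1 t) t)
    (hs2 : ∀ t ≥ (0 : ℝ), HasDerivAt s2 (-δ * s2 t) t)
    (hnonneg : ∀ t ≥ (0 : ℝ), 0 ≤ f t ∧ 0 ≤ m t ∧ 0 ≤ s1 t ∧ 0 ≤ s2 t)
    (hreg : ∀ t ≥ (0 : ℝ), 0 < m t + s1 t + s2 t ∧ f t + m t + s1 t + s2 t ≤ K) :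
    let c : ℝ := min (δ - K * β) δ
    (0 < c) ∧
    (∀ t ≥ (0 : ℝ),
      f t + m t + s1 t + s2 t ≤ (f 0 + m 0 + s1 0 + s2 0) * Real.exp (-c * t)) ∧
    Filter.Tendsto f Filter.atTop (nhds 0) ∧
    Filter.Tendsto m Filter.atTop (nhds 0) ∧
    Filter.Tendsto s1 Filter.atTop (nhds 0) ∧
    Filter.Tendsto s2 Filter.atTop (nhds 0) :=
  stmt_5_general β δ K hδ hstab f m s1 s2 hf hm hs1 hs2 hnonneg hreg
end

section
/- A real quartic polynomial λ⁴ + R1λ³ + R2λ² + R3λ + R4 has all roots with negative real part if and only if R1 > 0, R3 > 0, R4 > 0, and R1·R2·R3 > R3² + R1²·R4 (Routh–Hurwitz criterion for degree 4). -/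
open Complex in
lemma quad_neg_iff (a b : ℝ) :
    (∀ z : ℂ, z ^ 2 + (a : ℂ) * z + (b : ℂ) = 0 → z.re < 0) ↔ (0 < a ∧ 0 < b) := by
  constructor
  · intro H
    have hroot : ∀ x : ℝ, x ^ 2 + a * x + b = 0 → x < 0 := by
      intro x hx
      have := H (x : ℂ) (by exact_mod_cast congrArg (fun t : ℝ => (t : ℂ)) hx)
      simpa using this
    rcases le_or_gt 0 (a ^ 2 - 4 * b) with hD | hD
    · have hs := Real.sq_sqrt hD
      have h1 := hroot ((-a + Real.sqrt (a ^ 2 - 4 * b)) / 2) (by linear_combination hs / 4)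
      have h2 := hroot ((-a - Real.sqrt (a ^ 2 - 4 * b)) / 2) (by linear_combination hs / 4)
      constructor
      · nlinarith
      · nlinarith [hs]
    · have hD' : (0:ℝ) ≤ 4 * b - a ^ 2 := by linarith
      have hs := Real.sq_sqrt hD'
      have hcs : ((Real.sqrt (4 * b - a ^ 2) : ℝ) : ℂ) ^ 2 = 4 * (b:ℂ) - (a:ℂ) ^ 2 := by
        exact_mod_cast hs
      have hz := H (-(a:ℂ) / 2 + ((Real.sqrt (4 * b - a ^ 2) : ℝ) : ℂ) / 2 * I) (by
        linear_combination (((Real.sqrt (4 * b - a ^ 2) : ℝ) : ℂ) ^ 2 / 4) * Complex.I_sq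
          - (1 / 4) * hcs)
      simp at hz
      constructor
      · linarith
      · nlinarith [sq_nonneg a]
  · rintro ⟨ha, hb⟩ z hz
    rw [pow_two] at hz
    rw [Complex.ext_iff] at hz
    simp at hz
    obtain ⟨h1, h2⟩ := hz
    by_contra h
    push_neg at h
    have hy : z.im * (2 * z.re + a) = 0 := by linarith
    have hy0 : z.im = 0 := by
      rcases mul_eq_zero.mp hy with h' | h'
      · exact h'
      · nlinarith
    nlinarith [sq_nonneg z.re]

open Polynomial in
lemma exists_root_quartic (a b c d : ℂ) :
    ∃ z : ℂ, z ^ 4 + a * z ^ 3 + b * z ^ 2 + c * z + d = 0 := by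
  obtain ⟨z, hz⟩ := IsAlgClosed.exists_root (k := ℂ)
    (X ^ 4 + C a * X ^ 3 + C b * X ^ 2 + C c * X + C d) (by
      have : (X ^ 4 + C a * X ^ 3 + C b * X ^ 2 + C c * X + C d : ℂ[X]).degree = 4 := by
        compute_degree!
      rw [this]; decide)
  refine ⟨z, ?_⟩
  have := hz
  simp [Polynomial.IsRoot] at this
  linear_combination this

open Polynomial in
lemma exists_root_cubic (a b c : ℂ) : ∃ z : ℂ, z ^ 3 + a * z ^ 2 + b * z + c = 0 := by
  obtain ⟨z, hz⟩ := IsAlgClosed.exists_root (k := ℂ) (X ^ 3 + C a * X ^ 2 + C b * X + C c) (by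
    have : (X ^ 3 + C a * X ^ 2 + C b * X + C c : ℂ[X]).degree = 3 := by compute_degree!
    rw [this]; decide)
  refine ⟨z, ?_⟩
  have := hz
  simp [Polynomial.IsRoot] at this
  linear_combination this

open Polynomial in
lemma exists_root_quadratic (a b : ℂ) : ∃ z : ℂ, z ^ 2 + a * z + b = 0 := by
  obtain ⟨z, hz⟩ := IsAlgClosed.exists_root (k := ℂ) (X ^ 2 + C a * X + C b) (by
    have : (X ^ 2 + C a * X + C b : ℂ[X]).degree = 2 := by compute_degree!
    rw [this]; decide)
  refine ⟨z, ?_⟩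
  have := hz
  simp [Polynomial.IsRoot] at this
  linear_combination this

lemma quartic_factor (A B C D : ℂ) :
    ∃ z1 z2 z3 z4 : ℂ, ∀ z : ℂ,
      z ^ 4 + A * z ^ 3 + B * z ^ 2 + C * z + D = (z - z1) * (z - z2) * (z - z3) * (z - z4) := by
  obtain ⟨z1, h1⟩ := exists_root_quartic A B C D
  set c2 := z1 + A with hc2
  set c1 := z1 ^ 2 + A * z1 + B with hc1
  set c0 := z1 ^ 3 + A * z1 ^ 2 + B * z1 + C with hc0
  obtain ⟨z2, h2⟩ := exists_root_cubic c2 c1 c0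
  set d1 := z2 + c2 with hd1
  set d0 := z2 ^ 2 + c2 * z2 + c1 with hd0
  obtain ⟨z3, h3⟩ := exists_root_quadratic d1 d0
  refine ⟨z1, z2, z3, -(z3 + d1), fun z => ?_⟩
  simp only [hc2, hc1, hc0, hd1, hd0] at *
  linear_combination h1 + (z - z1) * h2 + (z - z1) * (z - z2) * h3

lemma pair_quad (R1 R2 R3 R4 : ℝ) (w1 w2 w3 w4 : ℂ)
    (hf : ∀ z : ℂ, z ^ 4 + (R1 : ℂ) * z ^ 3 + (R2 : ℂ) * z ^ 2 + (R3 : ℂ) * z + (R4 : ℂ)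
        = (z - w1) * (z - w2) * (z - w3) * (z - w4))
    (hR4 : R4 ≠ 0) (s p : ℝ) (hs : (s : ℂ) = w1 + w2) (hp : (p : ℂ) = w1 * w2) :
    ∃ a b c d : ℝ, ∀ z : ℂ,
      z ^ 4 + (R1 : ℂ) * z ^ 3 + (R2 : ℂ) * z ^ 2 + (R3 : ℂ) * z + (R4 : ℂ)
        = (z ^ 2 + (a : ℂ) * z + (b : ℂ)) * (z ^ 2 + (c : ℂ) * z + (d : ℂ)) := by
  have e1 : (R1 : ℂ) = -(w1 + w2 + w3 + w4) := by
    linear_combination (hf 2 - hf (-2) - 2 * (hf 1) + 2 * (hf (-1))) / 12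
  have e4 : (R4 : ℂ) = w1 * w2 * w3 * w4 := by
    linear_combination hf 0
  have hp0 : p ≠ 0 := by
    intro h
    apply hR4
    have h2 : (R4 : ℂ) = 0 := by
      rw [e4, show w1 * w2 * w3 * w4 = (w1 * w2) * (w3 * w4) by ring, ← hp, h]
      simp
    exact_mod_cast h2
  refine ⟨-s, p, R1 + s, R4 / p, fun z => ?_⟩
  have hA : ((-s : ℝ) : ℂ) = -(w1 + w2) := by push_cast; rw [hs]
  have hB : ((p : ℝ) : ℂ) = w1 * w2 := hp
  have hC : ((R1 + s : ℝ) : ℂ) = -(w3 + w4) := by push_cast; rw [hs] at *; linear_combination e1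
  have hD : ((R4 / p : ℝ) : ℂ) = w3 * w4 := by
    have hpc : (p : ℂ) ≠ 0 := by exact_mod_cast hp0
    push_cast
    field_simp
    linear_combination e4 - (w3 * w4) * hp
  rw [hf z]
  linear_combination ((-z) * ((z - w3) * (z - w4))) * hA - ((z - w3) * (z - w4)) * hB
    + ((-z) * (z ^ 2 + ((-s : ℝ) : ℂ) * z + (p : ℂ))) * hC
    - (z ^ 2 + ((-s : ℝ) : ℂ) * z + (p : ℂ)) * hD

open Complex in
lemma real_quad_factor (R1 R2 R3 R4 : ℝ) (z1 z2 z3 z4 : ℂ)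
    (hf : ∀ z : ℂ, z ^ 4 + (R1 : ℂ) * z ^ 3 + (R2 : ℂ) * z ^ 2 + (R3 : ℂ) * z + (R4 : ℂ)
        = (z - z1) * (z - z2) * (z - z3) * (z - z4))
    (hR4 : R4 ≠ 0) :
    ∃ a b c d : ℝ, ∀ z : ℂ,
      z ^ 4 + (R1 : ℂ) * z ^ 3 + (R2 : ℂ) * z ^ 2 + (R3 : ℂ) * z + (R4 : ℂ)
        = (z ^ 2 + (a : ℂ) * z + (b : ℂ)) * (z ^ 2 + (c : ℂ) * z + (d : ℂ)) := by
  have conjroot : ∀ w : ℂ, (w = z1 ∨ w = z2 ∨ w = z3 ∨ w = z4) →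
      ((starRingEnd ℂ) w = z1 ∨ (starRingEnd ℂ) w = z2 ∨ (starRingEnd ℂ) w = z3 ∨
        (starRingEnd ℂ) w = z4) := by
    intro w hw
    have hFw : w ^ 4 + (R1 : ℂ) * w ^ 3 + (R2 : ℂ) * w ^ 2 + (R3 : ℂ) * w + (R4 : ℂ) = 0 := by
      rcases hw with h | h | h | h <;> (subst h; rw [hf]; ring)
    have hFcw : ((starRingEnd ℂ) w) ^ 4 + (R1 : ℂ) * ((starRingEnd ℂ) w) ^ 3
        + (R2 : ℂ) * ((starRingEnd ℂ) w) ^ 2 + (R3 : ℂ) * ((starRingEnd ℂ) w) + (R4 : ℂ) = 0 := by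
      have := congrArg (starRingEnd ℂ) hFw
      simpa [map_add, map_mul, map_pow, Complex.conj_ofReal] using this
    rw [hf ((starRingEnd ℂ) w)] at hFcw
    simpa [mul_eq_zero, sub_eq_zero, or_assoc] using hFcw
  have main : ∀ w1 w2 w3 w4 : ℂ,
      (∀ z : ℂ, z ^ 4 + (R1 : ℂ) * z ^ 3 + (R2 : ℂ) * z ^ 2 + (R3 : ℂ) * z + (R4 : ℂ)
        = (z - w1) * (z - w2) * (z - w3) * (z - w4)) → (starRingEnd ℂ) w1 = w2 →
      ∃ a b c d : ℝ, ∀ z : ℂ,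
        z ^ 4 + (R1 : ℂ) * z ^ 3 + (R2 : ℂ) * z ^ 2 + (R3 : ℂ) * z + (R4 : ℂ)
          = (z ^ 2 + (a : ℂ) * z + (b : ℂ)) * (z ^ 2 + (c : ℂ) * z + (d : ℂ)) := by
    intro w1 w2 w3 w4 hf' hc
    refine pair_quad R1 R2 R3 R4 w1 w2 w3 w4 hf' hR4 (2 * w1.re) (Complex.normSq w1) ?_ ?_
    · rw [← hc, ← Complex.add_conj]
    · rw [← hc, ← Complex.mul_conj]
  have main2 : ∀ w1 w2 w3 w4 : ℂ,
      (∀ z : ℂ, z ^ 4 + (R1 : ℂ) * z ^ 3 + (R2 : ℂ) * z ^ 2 + (R3 : ℂ) * z + (R4 : ℂ)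
        = (z - w1) * (z - w2) * (z - w3) * (z - w4)) →
      (starRingEnd ℂ) w1 = w1 → (starRingEnd ℂ) w2 = w2 →
      ∃ a b c d : ℝ, ∀ z : ℂ,
        z ^ 4 + (R1 : ℂ) * z ^ 3 + (R2 : ℂ) * z ^ 2 + (R3 : ℂ) * z + (R4 : ℂ)
          = (z ^ 2 + (a : ℂ) * z + (b : ℂ)) * (z ^ 2 + (c : ℂ) * z + (d : ℂ)) := by
    intro w1 w2 w3 w4 hf' hc1 hc2
    rw [Complex.conj_eq_iff_re] at hc1 hc2
    refine pair_quad R1 R2 R3 R4 w1 w2 w3 w4 hf' hR4 (w1.re + w2.re) (w1.re * w2.re) ?_ ?_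
    · push_cast; rw [hc1, hc2]
    · push_cast; rw [hc1, hc2]
  rcases conjroot z1 (Or.inl rfl) with h1 | h1 | h1 | h1
  · rcases conjroot z2 (Or.inr (Or.inl rfl)) with h2 | h2 | h2 | h2
    · have hz21 : z2 = z1 := by
        rw [← Complex.conj_conj z2, h2, h1]
      exact main2 z1 z2 z3 z4 hf h1 (by rw [hz21]; exact h1)
    · exact main2 z1 z2 z3 z4 hf h1 h2
    · exact main z2 z3 z1 z4 (fun z => by rw [hf z]; ring) h2
    · exact main z2 z4 z1 z3 (fun z => by rw [hf z]; ring) h2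
  · exact main z1 z2 z3 z4 hf h1
  · exact main z1 z3 z2 z4 (fun z => by rw [hf z]; ring) h1
  · exact main z1 z4 z2 z3 (fun z => by rw [hf z]; ring) h1

lemma quad_coeffs (R1 R2 R3 R4 a b c d : ℝ)
    (hq : ∀ z : ℂ, z ^ 4 + (R1 : ℂ) * z ^ 3 + (R2 : ℂ) * z ^ 2 + (R3 : ℂ) * z + (R4 : ℂ)
        = (z ^ 2 + (a : ℂ) * z + (b : ℂ)) * (z ^ 2 + (c : ℂ) * z + (d : ℂ))) :
    R1 = a + c ∧ R2 = b + d + a * c ∧ R3 = a * d + b * c ∧ R4 = b * d := by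
  have e1 : (R1 : ℂ) = (a : ℂ) + (c : ℂ) := by
    linear_combination (hq 2 - hq (-2) - 2 * (hq 1) + 2 * (hq (-1))) / 12
  have e2 : (R2 : ℂ) = (b : ℂ) + (d : ℂ) + (a : ℂ) * (c : ℂ) := by
    linear_combination (hq 1 + hq (-1)) / 2 - hq 0
  have e3 : (R3 : ℂ) = (a : ℂ) * (d : ℂ) + (b : ℂ) * (c : ℂ) := by
    linear_combination (8 * (hq 1) - 8 * (hq (-1)) - hq 2 + hq (-2)) / 12
  have e4 : (R4 : ℂ) = (b : ℂ) * (d : ℂ) := by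
    linear_combination hq 0
  exact ⟨by exact_mod_cast e1, by exact_mod_cast e2, by exact_mod_cast e3, by exact_mod_cast e4⟩

theorem stmt_8 (R1 R2 R3 R4 : ℝ) :
    (∀ z : ℂ, z ^ 4 + (R1 : ℂ) * z ^ 3 + (R2 : ℂ) * z ^ 2 + (R3 : ℂ) * z + (R4 : ℂ) = 0
      → z.re < 0) ↔
    (0 < R1 ∧ 0 < R3 ∧ 0 < R4 ∧ R3 ^ 2 + R1 ^ 2 * R4 < R1 * R2 * R3) := by
  by_cases hR4 : R4 = 0
  · subst hR4
    constructor
    · intro H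
      have := H 0 (by push_cast; ring)
      simp at this
    · rintro ⟨-, -, h4, -⟩
      exact absurd h4 (by simp)
  · obtain ⟨z1, z2, z3, z4, hf⟩ := quartic_factor (R1 : ℂ) (R2 : ℂ) (R3 : ℂ) (R4 : ℂ)
    obtain ⟨a, b, c, d, hq⟩ := real_quad_factor R1 R2 R3 R4 z1 z2 z3 z4 hf hR4
    obtain ⟨e1, e2, e3, e4⟩ := quad_coeffs R1 R2 R3 R4 a b c d hq
    have key : R1 * R2 * R3 - (R3 ^ 2 + R1 ^ 2 * R4)
        = a * c * ((b - d) ^ 2 + (a + c) * (a * d + b * c)) := by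
      rw [e1, e2, e3, e4]; ring
    have hsplit : (∀ z : ℂ, z ^ 4 + (R1 : ℂ) * z ^ 3 + (R2 : ℂ) * z ^ 2 + (R3 : ℂ) * z
        + (R4 : ℂ) = 0 → z.re < 0) ↔ ((0 < a ∧ 0 < b) ∧ (0 < c ∧ 0 < d)) := by
      constructor
      · intro H
        refine ⟨(quad_neg_iff a b).mp ?_, (quad_neg_iff c d).mp ?_⟩
        · intro z hz; exact H z (by rw [hq z, hz, zero_mul])
        · intro z hz; exact H z (by rw [hq z, hz, mul_zero])
      · rintro ⟨h1, h2⟩ z hz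
        rw [hq z] at hz
        rcases mul_eq_zero.mp hz with h | h
        · exact (quad_neg_iff a b).mpr h1 z h
        · exact (quad_neg_iff c d).mpr h2 z h
    rw [hsplit]
    constructor
    · rintro ⟨⟨ha, hb⟩, hc, hd⟩
      have h3' : 0 < a * d + b * c := by nlinarith
      have hK : 0 < (b - d) ^ 2 + (a + c) * (a * d + b * c) := by nlinarith [sq_nonneg (b - d)]
      have hΔ : 0 < a * c * ((b - d) ^ 2 + (a + c) * (a * d + b * c)) :=
        mul_pos (mul_pos ha hc) hK
      refine ⟨by rw [e1]; linarith, by rw [e3]; linarith, by rw [e4]; positivity, by linarith⟩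
    · rintro ⟨h1, h3, h4, hΔ⟩
      rw [e1] at h1
      rw [e3] at h3
      rw [e4] at h4
      have hprod : 0 < a * c * ((b - d) ^ 2 + (a + c) * (a * d + b * c)) := by
        rw [← key]; linarith
      have hK : 0 < (b - d) ^ 2 + (a + c) * (a * d + b * c) := by nlinarith [sq_nonneg (b - d)]
      have hac : 0 < a * c := by
        by_contra h
        push_neg at h
        nlinarith
      have ha : 0 < a := by nlinarith
      have hc : 0 < c := by nlinarith
      have hb : 0 < b := by
        by_contra h
        push_neg at h
        have hb0 : b ≠ 0 := by
          intro h0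
          rw [h0] at h4
          simp at h4
        have hbneg : b < 0 := lt_of_le_of_ne h hb0
        have hdneg : d < 0 := by
          by_contra hd'
          push_neg at hd'
          nlinarith [mul_nonneg hd' (neg_pos.mpr hbneg).le]
        nlinarith [mul_pos ha (neg_pos.mpr hdneg), mul_pos (neg_pos.mpr hbneg) hc]
      have hd : 0 < d := by
        by_contra h
        push_neg at h
        nlinarith [mul_nonneg hb.le (neg_nonneg.mpr h)]
      exact ⟨⟨ha, hb⟩, hc, hd⟩
end
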